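/- arXiv:1402.2663 — 2 statements merged into one kernel-verified Lean document; each statement's English description precedes it below -/
import Mathlib

section
/- For any graphs G and H of orders n and n' respectively, the vertex cover number of the lexicographic product satisfies α(G∘H) = n·α(H) + n'·α(G) − α(G)·α(H). -/
/-!
Complements of vertex covers are exactly the independent sets, so `α(X) = |V(X)| - β(X)` for the
independence number `β`. An independent set of `G ∘ H` projects onto an independent set of `G` and
meets each fibre `{a} × V(H)` in a copy of an independent set of `H`, while a product of independent
sets is independent; hence `β(G ∘ H) = β(G) β(H)`, and the formula is the expansion of
`n n' - (n - α(G)) (n' - α(H))`.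
-/

open SimpleGraph

namespace Paper

variable {α β : Type*}

/-- The lexicographic product of two simple graphs. -/
def lexProd (G : SimpleGraph α) (H : SimpleGraph β) : SimpleGraph (α × β) where
  Adj p q := G.Adj p.1 q.1 ∨ (p.1 = q.1 ∧ H.Adj p.2 q.2)
  symm := by
    constructor
    rintro ⟨a, b⟩ ⟨c, d⟩ (h | ⟨h1, h2⟩)
    · exact Or.inl h.symm
    · exact Or.inr ⟨h1.symm, h2.symm⟩
  loopless := by
    constructor
    rintro ⟨a, b⟩ (h | ⟨h1, h2⟩)
    · exact G.loopless.irrefl a h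
    · exact H.loopless.irrefl b h2

/-- `u` is maximally distant from `v`. -/
def MaxDistant (G : SimpleGraph α) (u v : α) : Prop :=
  ∀ w, G.Adj u w → G.edist v w ≤ G.edist u v

/-- `u` and `v` are mutually maximally distant. -/
def MMD (G : SimpleGraph α) (u v : α) : Prop :=
  MaxDistant G u v ∧ MaxDistant G v u

/-- Two vertices are true twins if they have the same closed neighborhood. -/
def TrueTwins (G : SimpleGraph α) (u v : α) : Prop :=
  ∀ w, (G.Adj u w ∨ u = w) ↔ (G.Adj v w ∨ v = w)

/-- The boundary of a graph: vertices belonging to some mutually maximally distant pair. -/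
def boundary (G : SimpleGraph α) : Set α := {u | ∃ v, u ≠ v ∧ MMD G u v}

/-- The strong resolving graph of `G`, with vertex set the boundary of `G`. -/
def srGraph (G : SimpleGraph α) : SimpleGraph (boundary G) where
  Adj u v := u.1 ≠ v.1 ∧ MMD G u.1 v.1
  symm := ⟨fun u v h => ⟨h.1.symm, h.2.2, h.2.1⟩⟩
  loopless := ⟨fun u h => h.1 rfl⟩

/-- The graph `G*`: same vertices, `u ~ v` iff `d_G(u,v) ≥ 2` or `u,v` are true twins. -/
def gstar (G : SimpleGraph α) : SimpleGraph α where
  Adj u v := u ≠ v ∧ (2 ≤ G.edist u v ∨ TrueTwins G u v)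
  symm := by
    constructor
    rintro u v ⟨h1, (h2 | h2)⟩
    · exact ⟨h1.symm, Or.inl (by rwa [G.edist_comm] at h2)⟩
    · exact ⟨h1.symm, Or.inr fun w => (h2 w).symm⟩
  loopless := ⟨fun u h => h.1 rfl⟩

/-- `G*` with its isolated vertices removed. -/
def gstarMinus (G : SimpleGraph α) : SimpleGraph {x | ∃ y, (gstar G).Adj x y} :=
  SimpleGraph.induce _ (gstar G)

/-- Disjoint union of two graphs. -/
def disjUnion (G : SimpleGraph α) (H : SimpleGraph β) : SimpleGraph (α ⊕ β) where
  Adj x y := match x, y with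
    | Sum.inl a, Sum.inl b => G.Adj a b
    | Sum.inr a, Sum.inr b => H.Adj a b
    | _, _ => False
  symm := by
    constructor
    rintro (a | a) (b | b) h <;> simp_all <;> exact h.symm
  loopless := by
    constructor
    rintro (a | a) h <;> simp_all

/-- `k` disjoint copies of a graph. -/
def copies (k : ℕ) (G : SimpleGraph α) : SimpleGraph (Fin k × α) where
  Adj p q := p.1 = q.1 ∧ G.Adj p.2 q.2
  symm := ⟨fun p q h => ⟨h.1.symm, h.2.symm⟩⟩
  loopless := ⟨fun p h => G.loopless.irrefl _ h.2⟩

/-- The join `K₁ + H` of a single vertex with `H`. -/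
def joinK1 (H : SimpleGraph β) : SimpleGraph (Unit ⊕ β) where
  Adj x y := match x, y with
    | Sum.inl _, Sum.inl _ => False
    | Sum.inl _, Sum.inr _ => True
    | Sum.inr _, Sum.inl _ => True
    | Sum.inr a, Sum.inr b => H.Adj a b
  symm := by
    constructor
    rintro (a | a) (b | b) h <;> simp_all <;> exact h.symm
  loopless := by
    constructor
    rintro (a | a) h <;> simp_all

/-- `w` strongly resolves the pair `u, v`. -/
def StronglyResolves (G : SimpleGraph α) (w u v : α) : Prop :=
  G.edist w u = G.edist w v + G.edist v u ∨ G.edist w v = G.edist w u + G.edist u v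

/-- A strong metric generator. -/
def IsStrongGenerator (G : SimpleGraph α) (S : Finset α) : Prop :=
  ∀ u v : α, u ≠ v → ∃ w ∈ S, StronglyResolves G w u v

/-- The strong metric dimension. -/
noncomputable def sdim (G : SimpleGraph α) : ℕ :=
  sInf {k | ∃ S : Finset α, IsStrongGenerator G S ∧ S.card = k}

/-- A vertex cover. -/
def IsVertexCover (G : SimpleGraph α) (S : Finset α) : Prop :=
  ∀ ⦃u v : α⦄, G.Adj u v → u ∈ S ∨ v ∈ S

/-- The vertex cover number `α(G)`. -/
noncomputable def vcNum (G : SimpleGraph α) : ℕ :=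
  sInf {k | ∃ S : Finset α, IsVertexCover G S ∧ S.card = k}

/-- The independence number `β(G)`. -/
noncomputable def indepNum (G : SimpleGraph α) : ℕ :=
  sSup {k | ∃ S : Finset α, (∀ u ∈ S, ∀ v ∈ S, ¬ G.Adj u v) ∧ S.card = k}

theorem isVertexCover_iff_isIndepSet_compl [Fintype α] [DecidableEq α] {G : SimpleGraph α}
    {S : Finset α} : IsVertexCover G S ↔ G.IsIndepSet ↑Sᶜ := by
  rw [Finset.coe_compl]
  exact isIndepSet_compl_iff_isVertexCover.symm

theorem vcNum_le_card {G : SimpleGraph α} {S : Finset α} (hS : IsVertexCover G S) :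
    vcNum G ≤ S.card :=
  Nat.sInf_le ⟨S, hS, rfl⟩

theorem exists_isVertexCover_card_eq_vcNum [Fintype α] (G : SimpleGraph α) :
    ∃ S : Finset α, IsVertexCover G S ∧ S.card = vcNum G :=
  Nat.sInf_mem (s := {k | ∃ S : Finset α, IsVertexCover G S ∧ S.card = k})
    ⟨_, Finset.univ, fun u _ _ => Or.inl (Finset.mem_univ u), rfl⟩

theorem vcNum_add_indepNum [Fintype α] (G : SimpleGraph α) :
    vcNum G + G.indepNum = Fintype.card α := by
  classical
  obtain ⟨S, hS, hScard⟩ := exists_isVertexCover_card_eq_vcNum G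
  obtain ⟨I, hI, hIcard⟩ := G.exists_isNIndepSet_indepNum
  have hSc : Sᶜ.card ≤ G.indepNum :=
    (isVertexCover_iff_isIndepSet_compl.1 hS).card_le_indepNum
  have hIc : vcNum G ≤ Iᶜ.card :=
    vcNum_le_card (isVertexCover_iff_isIndepSet_compl.2 (by rwa [compl_compl]))
  rw [Finset.card_compl] at hSc hIc
  have := S.card_le_univ
  have := I.card_le_univ
  omega

section lexProd

open Finset

variable {G : SimpleGraph α} {H : SimpleGraph β}

theorem isIndepSet_prod_lexProd {I : Set α} {J : Set β} (hI : G.IsIndepSet I)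
    (hJ : H.IsIndepSet J) : (lexProd G H).IsIndepSet (I ×ˢ J) := by
  rintro ⟨a, b⟩ ⟨ha, hb⟩ ⟨c, d⟩ ⟨hc, hd⟩ hne (hac | ⟨rfl, hbd⟩)
  · exact hI ha hc hac.ne hac
  · exact hJ hb hd hbd.ne hbd

theorem isIndepSet_image_fst_of_lexProd {S : Set (α × β)} (hS : (lexProd G H).IsIndepSet S) :
    G.IsIndepSet (Prod.fst '' S) := by
  rintro _ ⟨p, hp, rfl⟩ _ ⟨q, hq, rfl⟩ hne hpq
  exact hS hp hq (fun h => hne (congrArg Prod.fst h)) (Or.inl hpq)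

theorem isIndepSet_image_snd_fiber_of_lexProd {S : Set (α × β)}
    (hS : (lexProd G H).IsIndepSet S) (a : α) :
    H.IsIndepSet (Prod.snd '' {p ∈ S | p.1 = a}) := by
  rintro _ ⟨p, ⟨hp, hpa⟩, rfl⟩ _ ⟨q, ⟨hq, hqa⟩, rfl⟩ hne hpq
  exact hS hp hq (fun h => hne (congrArg Prod.snd h)) (Or.inr ⟨hpa.trans hqa.symm, hpq⟩)

theorem indepNum_lexProd [Fintype α] [Fintype β] :
    (lexProd G H).indepNum = G.indepNum * H.indepNum := by
  classical
  refine le_antisymm ?_ ?_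
  · obtain ⟨S, hS, hScard⟩ := (lexProd G H).exists_isNIndepSet_indepNum
    have hfiber : ∀ a ∈ S.image Prod.fst, #{p ∈ S | p.1 = a} ≤ H.indepNum := by
      intro a _
      rw [← card_image_of_injOn fun p hp q hq h =>
        Prod.ext ((mem_filter.1 hp).2.trans (mem_filter.1 hq).2.symm) h]
      refine IsIndepSet.card_le_indepNum ?_
      simpa only [coe_image, coe_filter, mem_coe] using
        isIndepSet_image_snd_fiber_of_lexProd hS a
    have hbase : #(S.image Prod.fst) ≤ G.indepNum := by
      refine IsIndepSet.card_le_indepNum ?_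
      simpa only [coe_image] using isIndepSet_image_fst_of_lexProd hS
    calc (lexProd G H).indepNum = #S := hScard.symm
      _ ≤ H.indepNum * #(S.image Prod.fst) := S.card_le_mul_card_image _ hfiber
      _ ≤ G.indepNum * H.indepNum := by rw [mul_comm]; gcongr
  · obtain ⟨I, hI, hIcard⟩ := G.exists_isNIndepSet_indepNum
    obtain ⟨J, hJ, hJcard⟩ := H.exists_isNIndepSet_indepNum
    have hIJ : (lexProd G H).IsIndepSet ↑(I ×ˢ J) := by
      rw [coe_product]
      exact isIndepSet_prod_lexProd hI hJ
    simpa only [card_product, hIcard, hJcard] using hIJ.card_le_indepNum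

end lexProd

theorem stmt_10 [Fintype α] [Fintype β] (G : SimpleGraph α) (H : SimpleGraph β) :
    vcNum (lexProd G H) =
      Fintype.card α * vcNum H + Fintype.card β * vcNum G - vcNum G * vcNum H := by
  have hGH := vcNum_add_indepNum (lexProd G H)
  rw [indepNum_lexProd, Fintype.card_prod, ← vcNum_add_indepNum G, ← vcNum_add_indepNum H]
    at hGH
  rw [← vcNum_add_indepNum G, ← vcNum_add_indepNum H]
  refine (Nat.sub_eq_of_eq_add ?_).symm
  linarith

end Paper
end

section
/- Let G be a connected graph of order n ≥ 2 with no true twin vertices and let H be a graph of order n' ≥ 2 with diameter D(H) > 2 (including disconnected H, treated as infinite diameter). Then dim_s(G∘H) = n·dim_s(K₁+H) + n'·dim_s(G) − dim_s(G)·dim_s(K₁+H). -/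
open SimpleGraph

namespace Paper

variable {α β : Type*}

/-!
In a connected graph a set is a strong metric generator iff it meets every mutually maximally
distant (MMD) pair, i.e. `dim_s` is the vertex cover number of the strong resolving graph.
In `G ∘ H`, with `G` connected and nontrivial, two vertices in different columns are MMD iff their
projections are MMD in `G` (without true twins, MMD vertices of `G` are never adjacent), and two
vertices of one column are MMD iff they are MMD in `K₁ + H`, where the apex is in no MMD pair
because `D(H) > 2`. So a set covers the MMD pairs of `G ∘ H` iff its full columns cover those of
`G` and each of its columns covers those of `K₁ + H`; the smallest such set has
`dim_s(G) · n' + (n - dim_s(G)) · dim_s(K₁ + H)` elements.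
-/

section StrongResolving

variable {V : Type*} {G : SimpleGraph V}

lemma maxDistant_iff_dist (hG : G.Preconnected) {u v : V} :
    MaxDistant G u v ↔ ∀ w, G.Adj u w → G.dist v w ≤ G.dist u v := by
  simp only [MaxDistant, ← (hG _ _).coe_dist_eq_edist, Nat.cast_le]

lemma stronglyResolves_iff_dist (hG : G.Preconnected) {w u v : V} :
    StronglyResolves G w u v ↔
      G.dist w u = G.dist w v + G.dist v u ∨ G.dist w v = G.dist w u + G.dist u v := by
  simp only [StronglyResolves, ← (hG _ _).coe_dist_eq_edist, ← Nat.cast_add, Nat.cast_inj]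

lemma dist_triangle_of_preconnected (hG : G.Preconnected) (u v w : V) :
    G.dist u w ≤ G.dist u v + G.dist v w :=
  (hG u v).dist_triangle_left w

lemma exists_adj_dist_add_one_eq (hG : G.Preconnected) {v w : V} (hvw : v ≠ w) :
    ∃ v', G.Adj v v' ∧ G.dist w v' + 1 = G.dist w v := by
  obtain ⟨p, hp⟩ := (hG v w).exists_walk_length_eq_dist
  cases p with
  | nil => exact absurd rfl hvw
  | @cons _ v' _ hadj q =>
    have hq : G.dist v' w ≤ q.length := dist_le q
    have htri := dist_triangle_of_preconnected hG v v' w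
    rw [dist_eq_one_iff_adj.mpr hadj, ← hp, Walk.length_cons] at htri
    refine ⟨v', hadj, ?_⟩
    rw [dist_comm, dist_comm (u := w), ← hp, Walk.length_cons]
    omega

/-- A vertex `w` strongly resolving a pair through the far end `v` must be `v` itself, since a
neighbour of `v` closer to `w` would be at least as far from `u`. -/
lemma eq_of_maxDistant_of_dist_eq_add (hG : G.Preconnected) {u v w : V}
    (hmax : MaxDistant G v u) (h : G.dist w u = G.dist w v + G.dist v u) : w = v := by
  by_contra hwv
  obtain ⟨v', hadj, hv'⟩ := exists_adj_dist_add_one_eq hG (Ne.symm hwv)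
  have hfar := (maxDistant_iff_dist hG).mp hmax v' hadj
  have htri := dist_triangle_of_preconnected hG w v' u
  rw [dist_comm] at hfar
  omega

lemma MMD.eq_or_eq_of_stronglyResolves (hG : G.Preconnected) {u v w : V} (hm : MMD G u v)
    (hw : StronglyResolves G w u v) : w = u ∨ w = v := by
  rcases (stronglyResolves_iff_dist hG).mp hw with h | h
  · exact Or.inr (eq_of_maxDistant_of_dist_eq_add hG hm.2 h)
  · exact Or.inl (eq_of_maxDistant_of_dist_eq_add hG hm.1 h)

/-- Take `u'` farthest from `v` among the vertices `x` with `d(v, x) = d(v, u) + d(u, x)`. -/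
lemma exists_maxDistant_dist_eq_add [Finite V] (hG : G.Preconnected) (v u : V) :
    ∃ u', MaxDistant G u' v ∧ G.dist v u' = G.dist v u + G.dist u u' := by
  have : Nonempty {x // G.dist v x = G.dist v u + G.dist u x} := ⟨⟨u, by simp⟩⟩
  obtain ⟨⟨u', hu'⟩, hmax⟩ :=
    Finite.exists_max fun x : {x // G.dist v x = G.dist v u + G.dist u x} ↦ G.dist v x
  refine ⟨u', (maxDistant_iff_dist hG).mpr fun w hw ↦ ?_, hu'⟩
  by_contra! hlt
  have h1 := dist_triangle_of_preconnected hG v u' w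
  have h2 := dist_triangle_of_preconnected hG u u' w
  have h3 := dist_triangle_of_preconnected hG v u w
  rw [dist_eq_one_iff_adj.mpr hw] at h1 h2
  rw [dist_comm] at hlt
  have := hmax ⟨w, by omega⟩
  dsimp only at this
  omega

variable {S : Finset V}

/-- `S` is a vertex cover of the strong resolving graph `srGraph G`, stated on `V` itself. -/
def IsMMDCover (G : SimpleGraph V) (S : Finset V) : Prop :=
  ∀ u v, u ≠ v → MMD G u v → u ∈ S ∨ v ∈ S

lemma IsStrongGenerator.isMMDCover (hG : G.Preconnected) (hS : IsStrongGenerator G S) :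
    IsMMDCover G S := by
  intro u v huv hm
  obtain ⟨w, hwS, hw⟩ := hS u v huv
  rcases hm.eq_or_eq_of_stronglyResolves hG hw with rfl | rfl
  exacts [Or.inl hwS, Or.inr hwS]

/-- Extending `u` away from `v` to `u'`, and then `v` away from `u'` to `v'`, gives a mutually
maximally distant pair `u', v'`, each of which strongly resolves `u, v`. -/
lemma IsMMDCover.isStrongGenerator [Finite V] (hG : G.Preconnected) (hS : IsMMDCover G S) :
    IsStrongGenerator G S := by
  intro u v huv
  obtain ⟨u', hu'max, hu'⟩ := exists_maxDistant_dist_eq_add hG v u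
  obtain ⟨v', hv'max, hv'⟩ := exists_maxDistant_dist_eq_add hG u' v
  have hmm : MMD G u' v' := by
    refine ⟨(maxDistant_iff_dist hG).mpr fun w hw ↦ ?_, hv'max⟩
    have h1 := (maxDistant_iff_dist hG).mp hu'max w hw
    have h2 := dist_triangle_of_preconnected hG v' v w
    have := G.dist_comm (u := v) (v := v')
    have := G.dist_comm (u := v) (v := u')
    omega
  have hne : u' ≠ v' := by
    rintro rfl
    rw [dist_self] at hv'
    have : G.dist v u = 0 := by omega
    exact huv ((hG v u).dist_eq_zero_iff.mp this).symm
  rcases hS u' v' hne hmm with hu'S | hv'S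
  · refine ⟨u', hu'S, (stronglyResolves_iff_dist hG).mpr (Or.inr ?_)⟩
    have := G.dist_comm (u := v) (v := u')
    have := G.dist_comm (u := v) (v := u)
    have := G.dist_comm (u := u) (v := u')
    omega
  · refine ⟨v', hv'S, (stronglyResolves_iff_dist hG).mpr (Or.inl ?_)⟩
    have h1 := dist_triangle_of_preconnected hG v' v u
    have h2 := dist_triangle_of_preconnected hG u' u v'
    have := G.dist_comm (u := v) (v := u')
    have := G.dist_comm (u := v) (v := v')
    have := G.dist_comm (u := u) (v := u')
    have := G.dist_comm (u := u) (v := v')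
    omega

lemma IsMMDCover.mono {T : Finset V} (hS : IsMMDCover G S) (hST : S ⊆ T) : IsMMDCover G T :=
  fun u v huv hm ↦ (hS u v huv hm).imp (@hST u) (@hST v)

lemma isStrongGenerator_univ [Fintype V] : IsStrongGenerator G Finset.univ :=
  fun _ v _ ↦ ⟨v, Finset.mem_univ v, Or.inl (by simp)⟩

lemma sdim_le_card_of_isStrongGenerator (hS : IsStrongGenerator G S) : sdim G ≤ S.card :=
  Nat.sInf_le ⟨S, hS, rfl⟩

lemma sdim_le_card [Fintype V] : sdim G ≤ Fintype.card V :=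
  sdim_le_card_of_isStrongGenerator isStrongGenerator_univ

lemma sdim_le_card_of_isMMDCover [Finite V] (hG : G.Preconnected) (hS : IsMMDCover G S) :
    sdim G ≤ S.card :=
  sdim_le_card_of_isStrongGenerator (hS.isStrongGenerator hG)

lemma exists_isMMDCover_card_eq_sdim [Fintype V] (hG : G.Preconnected) :
    ∃ S, IsMMDCover G S ∧ S.card = sdim G := by
  obtain ⟨S, hS, hcard⟩ := Nat.sInf_mem (⟨_, Finset.univ, isStrongGenerator_univ, rfl⟩ :
    {k | ∃ S : Finset V, IsStrongGenerator G S ∧ S.card = k}.Nonempty)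
  exact ⟨S, hS.isMMDCover hG, hcard⟩

end StrongResolving

section LexProd

variable {G : SimpleGraph α} {H : SimpleGraph β}

@[simp]
lemma lexProd_adj_mk_left {a : α} {b d : β} : (lexProd G H).Adj (a, b) (a, d) ↔ H.Adj b d := by
  simp [lexProd]

lemma edist_fst_le_edist_lexProd (p q : α × β) : G.edist p.1 q.1 ≤ (lexProd G H).edist p q := by
  by_cases htop : (lexProd G H).edist p q = ⊤
  · simp [htop]
  obtain ⟨w, hw⟩ := exists_walk_of_edist_ne_top htop
  rw [← hw]
  clear hw htop
  induction w with
  | nil => simp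
  | @cons p r q h w ih =>
    by_cases hpr : p.1 = r.1
    · calc G.edist p.1 q.1 = G.edist r.1 q.1 := by rw [hpr]
        _ ≤ w.length := ih
        _ ≤ (w.cons h).length := by simp
    · have hG : G.Adj p.1 r.1 := h.resolve_right fun h' ↦ hpr h'.1
      calc G.edist p.1 q.1 ≤ G.edist p.1 r.1 + G.edist r.1 q.1 := G.edist_triangle
        _ ≤ 1 + w.length := by gcongr; exact edist_le hG.toWalk
        _ = (w.cons h).length := by simp [add_comm]

lemma edist_lexProd_le_length {a c : α} (w : G.Walk a c) (hw : ¬w.Nil) (b d : β) :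
    (lexProd G H).edist (a, b) (c, d) ≤ w.length := by
  cases w with
  | nil => exact absurd Walk.Nil.nil hw
  | cons h q =>
    let toColumn : G →g lexProd G H := ⟨fun a ↦ (a, d), Or.inl⟩
    have hstart : (lexProd G H).Adj (a, b) (toColumn _) := Or.inl h
    calc (lexProd G H).edist (a, b) (c, d) ≤ ((q.map toColumn).cons hstart).length := edist_le _
      _ = (q.cons h).length := by rw [Walk.length_cons, Walk.length_cons, Walk.length_map]

lemma edist_lexProd_of_ne {a c : α} (hac : a ≠ c) (b d : β) :
    (lexProd G H).edist (a, b) (c, d) = G.edist a c := by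
  refine le_antisymm ?_ (edist_fst_le_edist_lexProd (a, b) (c, d))
  by_cases htop : G.edist a c = ⊤
  · simp [htop]
  obtain ⟨w, hw⟩ := exists_walk_of_edist_ne_top htop
  rw [← hw]
  exact edist_lexProd_le_length w (w.not_nil_of_ne hac) b d

/-- Each column `{a} × β` sits in `G ∘ H` as `H` sits in `K₁ + H`: a neighbour of `a` plays the
apex. -/
lemma edist_lexProd_mk_left {a a' : α} (ha : G.Adj a a') (b d : β) :
    (lexProd G H).edist (a, b) (a, d) = (joinK1 H).edist (Sum.inr b) (Sum.inr d) := by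
  by_cases hbd : b = d
  · simp [hbd]
  by_cases hadj : H.Adj b d
  · rw [edist_eq_one_iff_adj.mpr (lexProd_adj_mk_left.mpr hadj),
      edist_eq_one_iff_adj.mpr (show (joinK1 H).Adj (.inr b) (.inr d) from hadj)]
  · rw [edist_eq_two_iff.mpr ⟨by simpa using hbd, by simpa using hadj,
        ⟨(a', b), (lexProd G H).mem_commonNeighbors.mpr ⟨Or.inl ha, Or.inl ha⟩⟩⟩,
      (edist_eq_two_iff (G := joinK1 H) (u := .inr b) (v := .inr d)).mpr ⟨by simpa using hbd, hadj,
        ⟨Sum.inl (), (joinK1 H).mem_commonNeighbors.mpr ⟨trivial, trivial⟩⟩⟩]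

lemma lexProd_preconnected (hG : G.Preconnected) (hdeg : ∀ a, ∃ a', G.Adj a a') :
    (lexProd G H).Preconnected := by
  rintro ⟨a, b⟩ ⟨c, d⟩
  by_cases hac : a = c
  · subst hac
    obtain ⟨a', ha⟩ := hdeg a
    exact (show (lexProd G H).Adj (a, b) (a', b) from Or.inl ha).reachable.trans
      (show (lexProd G H).Adj (a', b) (a, d) from Or.inl ha.symm).reachable
  · refine reachable_of_edist_ne_top ?_
    rw [edist_lexProd_of_ne hac]
    exact edist_ne_top_iff_reachable.mpr (hG a c)

end LexProd

section JoinK1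

variable {H : SimpleGraph β}

lemma exists_ne_not_adj_of_two_lt_ediam (hdiam : 2 < H.ediam) (d : β) :
    ∃ x, x ≠ d ∧ ¬H.Adj d x := by
  by_contra! hall
  have hecc : H.eccent d ≤ 1 := (eccent_le_one_iff d).mpr fun x hx ↦ hall x (Ne.symm hx)
  have : H.ediam ≤ 2 :=
    calc H.ediam ≤ 2 * H.eccent d := ediam_le_two_mul_eccent d
      _ ≤ 2 * 1 := by gcongr
      _ = 2 := mul_one 2
  exact absurd hdiam (not_lt.mpr this)

/-- The apex is at distance `1` from `inr d`, but some `inr x` is at distance `2` from it. -/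
lemma not_maxDistant_joinK1_inl_inr (hdiam : 2 < H.ediam) (u : Unit) (d : β) :
    ¬MaxDistant (joinK1 H) (Sum.inl u) (Sum.inr d) := by
  intro hmax
  obtain ⟨x, hxd, hdx⟩ := exists_ne_not_adj_of_two_lt_ediam hdiam d
  have hle := (hmax (Sum.inr x) trivial).trans
    (edist_le (show (joinK1 H).Adj (Sum.inl u) (Sum.inr d) from trivial).toWalk)
  rcases edist_le_one_iff_adj_or_eq.mp hle with hadj | heq
  · exact hdx hadj
  · exact hxd (Sum.inr_injective heq).symm

lemma MMD.exists_eq_inr_of_joinK1 (hdiam : 2 < H.ediam) {x y : Unit ⊕ β}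
    (hm : MMD (joinK1 H) x y) (hxy : x ≠ y) : ∃ b d, x = Sum.inr b ∧ y = Sum.inr d := by
  match x, y with
  | .inl _, .inl _ => exact absurd rfl hxy
  | .inl u, .inr d => exact absurd hm.1 (not_maxDistant_joinK1_inl_inr hdiam u d)
  | .inr b, .inl u => exact absurd hm.2 (not_maxDistant_joinK1_inl_inr hdiam u b)
  | .inr b, .inr d => exact ⟨b, d, rfl, rfl⟩

lemma maxDistant_joinK1_inr_iff {b d : β} (hbd : b ≠ d) :
    MaxDistant (joinK1 H) (Sum.inr b) (Sum.inr d) ↔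
      ∀ x, H.Adj b x →
        (joinK1 H).edist (Sum.inr d) (Sum.inr x) ≤ (joinK1 H).edist (Sum.inr b) (Sum.inr d) := by
  refine ⟨fun hmax x hx ↦ hmax (Sum.inr x) hx, ?_⟩
  rintro h (u | x) hx
  · calc (joinK1 H).edist (Sum.inr d) (Sum.inl u) ≤ 1 :=
          edist_le (show (joinK1 H).Adj (Sum.inr d) (Sum.inl u) from trivial).toWalk
      _ ≤ _ := Order.one_le_iff_pos.mpr (edist_pos_of_ne (by simpa using hbd))
  · exact h x hx

lemma joinK1_preconnected : (joinK1 H).Preconnected := by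
  have hapex : ∀ x, (joinK1 H).Reachable x (Sum.inl ()) := by
    rintro (⟨⟩ | b)
    · rfl
    · exact (show (joinK1 H).Adj (Sum.inr b) (Sum.inl ()) from trivial).reachable
  exact fun x y ↦ (hapex x).trans (hapex y).symm

lemma sdim_joinK1_le_card [Fintype β] (hdiam : 2 < H.ediam) :
    sdim (joinK1 H) ≤ Fintype.card β := by
  have hcover : IsMMDCover (joinK1 H) (Finset.univ.map Function.Embedding.inr) := by
    intro x y hxy hm
    obtain ⟨b, d, rfl, rfl⟩ := hm.exists_eq_inr_of_joinK1 hdiam hxy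
    simp
  simpa using sdim_le_card_of_isMMDCover joinK1_preconnected hcover

end JoinK1

section LexProdMMD

variable {G : SimpleGraph α} {H : SimpleGraph β}

lemma maxDistant_lexProd_mk_left_iff {a a' : α} (ha : G.Adj a a') {b d : β} (hbd : b ≠ d) :
    MaxDistant (lexProd G H) (a, b) (a, d) ↔ MaxDistant (joinK1 H) (Sum.inr b) (Sum.inr d) := by
  rw [maxDistant_joinK1_inr_iff hbd]
  refine ⟨fun hmax x hx ↦ ?_, ?_⟩
  · simpa only [edist_lexProd_mk_left ha] using hmax (a, x) (lexProd_adj_mk_left.mpr hx)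
  rintro h ⟨c, x⟩ (hac | ⟨rfl, hx⟩)
  · calc (lexProd G H).edist (a, d) (c, x) ≤ 1 :=
          edist_le (show (lexProd G H).Adj (a, d) (c, x) from Or.inl hac).toWalk
      _ ≤ _ := Order.one_le_iff_pos.mpr (edist_pos_of_ne (by simpa using hbd))
  · simpa only [edist_lexProd_mk_left ha] using h x hx

lemma mmd_lexProd_mk_left_iff {a a' : α} (ha : G.Adj a a') {b d : β} (hbd : b ≠ d) :
    MMD (lexProd G H) (a, b) (a, d) ↔ MMD (joinK1 H) (Sum.inr b) (Sum.inr d) :=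
  and_congr (maxDistant_lexProd_mk_left_iff ha hbd) (maxDistant_lexProd_mk_left_iff ha hbd.symm)

lemma MaxDistant.adj_or_eq_of_adj {u v w : α} (hmax : MaxDistant G u v) (huv : G.Adj u v)
    (huw : G.Adj u w ∨ u = w) : G.Adj v w ∨ v = w := by
  rcases huw with huw | rfl
  · exact edist_le_one_iff_adj_or_eq.mp ((hmax w huw).trans (edist_eq_one_iff_adj.mpr huv).le)
  · exact Or.inl huv.symm

lemma MMD.trueTwins_of_adj {u v : α} (hm : MMD G u v) (huv : G.Adj u v) : TrueTwins G u v :=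
  fun _ ↦ ⟨hm.1.adj_or_eq_of_adj huv, hm.2.adj_or_eq_of_adj huv.symm⟩

lemma maxDistant_of_maxDistant_lexProd {a c : α} (hac : a ≠ c) {b d : β}
    (hmax : MaxDistant (lexProd G H) (a, b) (c, d)) : MaxDistant G a c := by
  intro w hw
  by_cases hwc : w = c
  · simp [hwc]
  simpa only [edist_lexProd_of_ne hac, edist_lexProd_of_ne (Ne.symm hwc)] using
    hmax (w, b) (Or.inl hw)

lemma maxDistant_lexProd_of_maxDistant {a c : α} (hac : a ≠ c) (hnadj : ¬G.Adj a c)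
    (hmax : MaxDistant G a c) (b d : β) : MaxDistant (lexProd G H) (a, b) (c, d) := by
  rintro ⟨w, x⟩ (hw | ⟨rfl, -⟩)
  · have hcw : c ≠ w := by rintro rfl; exact hnadj hw
    rw [edist_lexProd_of_ne hac, edist_lexProd_of_ne hcw]
    exact hmax w hw
  · rw [edist_lexProd_of_ne hac, edist_lexProd_of_ne (Ne.symm hac), edist_comm]

/-- Without true twins, mutually maximally distant vertices of `G` are not adjacent, so every
neighbour of `(a, b)` lies outside the column of `(c, d)`. -/
lemma mmd_lexProd_iff_of_ne (htw : ∀ u v : α, TrueTwins G u v → u = v) {a c : α} (hac : a ≠ c)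
    (b d : β) : MMD (lexProd G H) (a, b) (c, d) ↔ MMD G a c := by
  refine ⟨fun hm ↦ ⟨maxDistant_of_maxDistant_lexProd hac hm.1,
    maxDistant_of_maxDistant_lexProd (Ne.symm hac) hm.2⟩, fun hm ↦ ?_⟩
  have hnadj : ¬G.Adj a c := fun hadj ↦ hac (htw a c (hm.trueTwins_of_adj hadj))
  exact ⟨maxDistant_lexProd_of_maxDistant hac hnadj hm.1 b d,
    maxDistant_lexProd_of_maxDistant (Ne.symm hac) (fun h ↦ hnadj h.symm) hm.2 d b⟩

end LexProdMMD

section Columns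

noncomputable def column (S : Finset (α × β)) (a : α) : Finset β :=
  S.preimage (Prod.mk a) (Prod.mk_right_injective a).injOn

@[simp]
lemma mem_column {S : Finset (α × β)} {a : α} {b : β} : b ∈ column S a ↔ (a, b) ∈ S :=
  Finset.mem_preimage

lemma card_eq_sum_card_column [Fintype α] [Fintype β] (S : Finset (α × β)) :
    S.card = ∑ a, (column S a).card := by
  classical
  calc S.card = ∑ p : α × β, if p ∈ S then 1 else 0 := by simp
    _ = ∑ a, (column S a).card := by
      rw [Fintype.sum_prod_type]
      refine Finset.sum_congr rfl fun a _ ↦ ?_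
      rw [Finset.sum_boole, Nat.cast_id]
      congr 1
      ext b
      simp

noncomputable def fullColumns [Fintype α] [Fintype β] [DecidableEq β] (S : Finset (α × β)) :
    Finset α :=
  Finset.univ.filter fun a ↦ column S a = Finset.univ

lemma mem_fullColumns [Fintype α] [Fintype β] [DecidableEq β] {S : Finset (α × β)} {a : α} :
    a ∈ fullColumns S ↔ ∀ b, (a, b) ∈ S := by
  simp [fullColumns, Finset.eq_univ_iff_forall]

lemma sum_ite_mem_univ [Fintype α] [DecidableEq α] (A : Finset α) (x y : ℕ) :
    ∑ a, (if a ∈ A then x else y) = A.card * x + (Fintype.card α - A.card) * y := by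
  rw [Finset.sum_ite, Finset.sum_const, Finset.sum_const, smul_eq_mul, smul_eq_mul]
  simp [Finset.filter_not, ← Finset.compl_eq_univ_sdiff, Finset.card_compl]

end Columns

section LexProdCover

variable [Fintype α] [Fintype β] {G : SimpleGraph α} {H : SimpleGraph β}

lemma isMMDCover_lexProd_iff [DecidableEq β] (hdeg : ∀ a, ∃ a', G.Adj a a')
    (htw : ∀ u v : α, TrueTwins G u v → u = v) (hdiam : 2 < H.ediam) {S : Finset (α × β)} :
    IsMMDCover (lexProd G H) S ↔
      IsMMDCover G (fullColumns S) ∧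
        ∀ a, IsMMDCover (joinK1 H) ((column S a).map Function.Embedding.inr) := by
  constructor
  · intro hS
    refine ⟨fun a c hac hm ↦ ?_, fun a x y hxy hm ↦ ?_⟩
    · by_contra! hnot
      simp only [mem_fullColumns, not_forall] at hnot
      obtain ⟨⟨b, hb⟩, ⟨d, hd⟩⟩ := hnot
      rcases hS (a, b) (c, d) (by simp [hac]) ((mmd_lexProd_iff_of_ne htw hac b d).mpr hm) with
        h | h
      exacts [hb h, hd h]
    · obtain ⟨b, d, rfl, rfl⟩ := hm.exists_eq_inr_of_joinK1 hdiam hxy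
      obtain ⟨a', ha⟩ := hdeg a
      have hbd : b ≠ d := by simpa using hxy
      simpa using hS (a, b) (a, d) (by simpa using hbd) ((mmd_lexProd_mk_left_iff ha hbd).mpr hm)
  · rintro ⟨hfull, hcol⟩ ⟨a, b⟩ ⟨c, d⟩ hne hm
    by_cases hac : a = c
    · subst hac
      obtain ⟨a', ha⟩ := hdeg a
      have hbd : b ≠ d := by simpa using hne
      simpa using hcol a (Sum.inr b) (Sum.inr d) (by simpa using hbd)
        ((mmd_lexProd_mk_left_iff ha hbd).mp hm)
    · rcases hfull a c hac ((mmd_lexProd_iff_of_ne htw hac b d).mp hm) with h | h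
      exacts [Or.inl (mem_fullColumns.mp h b), Or.inr (mem_fullColumns.mp h d)]

/-- A cover with `t` full columns has at least `t * |β| + (|α| - t) * sdim (K₁ + H)` elements, a
count that increases with `t ≥ sdim G` because `sdim (K₁ + H) ≤ |β|`. -/
lemma le_sdim_lexProd (hG : G.Preconnected) (hdeg : ∀ a, ∃ a', G.Adj a a')
    (htw : ∀ u v : α, TrueTwins G u v → u = v) (hdiam : 2 < H.ediam) :
    sdim G * Fintype.card β + (Fintype.card α - sdim G) * sdim (joinK1 H) ≤
      sdim (lexProd G H) := by
  classical
  obtain ⟨S, hS, hScard⟩ :=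
    exists_isMMDCover_card_eq_sdim (lexProd_preconnected (H := H) hG hdeg)
  obtain ⟨hfull, hcol⟩ := (isMMDCover_lexProd_iff hdeg htw hdiam).mp hS
  set A := fullColumns S
  have hcolumn : ∀ a, (if a ∈ A then Fintype.card β else sdim (joinK1 H)) ≤ (column S a).card := by
    intro a
    split_ifs with ha
    · rw [Finset.eq_univ_of_forall fun b ↦ mem_column.mpr (mem_fullColumns.mp ha b),
        Finset.card_univ]
    · exact (sdim_le_card_of_isMMDCover joinK1_preconnected (hcol a)).trans_eq (Finset.card_map _)
  have hmono : sdim G * Fintype.card β + (Fintype.card α - sdim G) * sdim (joinK1 H) ≤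
      A.card * Fintype.card β + (Fintype.card α - A.card) * sdim (joinK1 H) := by
    obtain ⟨i, hi⟩ := Nat.exists_eq_add_of_le (sdim_le_card_of_isMMDCover hG hfull)
    obtain ⟨j, hj⟩ := Nat.exists_eq_add_of_le (Finset.card_le_univ A)
    have := Nat.mul_le_mul_left i (sdim_joinK1_le_card hdiam)
    rw [hj, hi, show sdim G + i + j - sdim G = i + j by omega, Nat.add_sub_cancel_left]
    nlinarith
  calc _ ≤ A.card * Fintype.card β + (Fintype.card α - A.card) * sdim (joinK1 H) := hmono
    _ = ∑ a, if a ∈ A then Fintype.card β else sdim (joinK1 H) := (sum_ite_mem_univ ..).symm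
    _ ≤ ∑ a, (column S a).card := Finset.sum_le_sum fun a _ ↦ hcolumn a
    _ = sdim (lexProd G H) := hScard ▸ (card_eq_sum_card_column S).symm

/-- Full columns over a strong metric basis of `G`, and in the other columns a copy of the part
of a strong metric basis of `K₁ + H` inside `H`. -/
lemma sdim_lexProd_le (hG : G.Preconnected) (hdeg : ∀ a, ∃ a', G.Adj a a')
    (htw : ∀ u v : α, TrueTwins G u v → u = v) (hdiam : 2 < H.ediam) :
    sdim (lexProd G H) ≤
      sdim G * Fintype.card β + (Fintype.card α - sdim G) * sdim (joinK1 H) := by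
  classical
  obtain ⟨SG, hSG, hSGcard⟩ := exists_isMMDCover_card_eq_sdim hG
  obtain ⟨SK, hSK, hSKcard⟩ := exists_isMMDCover_card_eq_sdim (joinK1_preconnected (H := H))
  set B := SK.preimage Sum.inr Sum.inr_injective.injOn
  have hB : IsMMDCover (joinK1 H) (B.map Function.Embedding.inr) := by
    intro x y hxy hm
    obtain ⟨b, d, rfl, rfl⟩ := hm.exists_eq_inr_of_joinK1 hdiam hxy
    simpa [B] using hSK _ _ hxy hm
  have hBcard : B.card ≤ sdim (joinK1 H) := by
    rw [← hSKcard, ← Finset.card_map Function.Embedding.inr]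
    refine Finset.card_le_card fun x hx ↦ ?_
    obtain ⟨b, hb, rfl⟩ := Finset.mem_map.mp hx
    exact Finset.mem_preimage.mp hb
  set S : Finset (α × β) := Finset.univ.filter fun p ↦ p.1 ∈ SG ∨ p.2 ∈ B
  have hS : IsMMDCover (lexProd G H) S := by
    refine (isMMDCover_lexProd_iff hdeg htw hdiam).mpr ⟨hSG.mono fun a ha ↦ ?_, fun a ↦ ?_⟩
    · exact mem_fullColumns.mpr fun b ↦ by simp [S, ha]
    · exact hB.mono (Finset.map_subset_map.mpr fun b hb ↦ by simp [S, hb])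
  have hcolumn : ∀ a, column S a = if a ∈ SG then Finset.univ else B := by
    intro a
    ext b
    split_ifs with ha <;> simp [S, ha]
  calc sdim (lexProd G H) ≤ S.card :=
        sdim_le_card_of_isMMDCover (lexProd_preconnected hG hdeg) hS
    _ = SG.card * Fintype.card β + (Fintype.card α - SG.card) * B.card := by
      rw [card_eq_sum_card_column, ← sum_ite_mem_univ]
      exact Finset.sum_congr rfl fun a _ ↦ by rw [hcolumn, apply_ite Finset.card, Finset.card_univ]
    _ ≤ _ := by rw [hSGcard]; gcongr

end LexProdCover

theorem stmt_16_general [Fintype α] [Fintype β] (G : SimpleGraph α) (H : SimpleGraph β)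
    (hG : G.Connected) (hn : 2 ≤ Fintype.card α)
    (htw : ∀ u v : α, TrueTwins G u v → u = v)
    (hdiam : 2 < H.ediam) :
    sdim (lexProd G H) =
      Fintype.card α * sdim (joinK1 H) + Fintype.card β * sdim G -
        sdim G * sdim (joinK1 H) := by
  classical
  have : Nontrivial α := Fintype.one_lt_card_iff_nontrivial.mp hn
  have hdeg : ∀ a, ∃ a', G.Adj a a' := hG.preconnected.exists_adj_of_nontrivial
  rw [le_antisymm (sdim_lexProd_le hG.preconnected hdeg htw hdiam)
    (le_sdim_lexProd hG.preconnected hdeg htw hdiam)]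
  obtain ⟨j, hj⟩ := Nat.exists_eq_add_of_le (sdim_le_card (G := G))
  rw [hj, Nat.add_sub_cancel_left, add_mul, mul_comm (Fintype.card β)]
  omega

theorem stmt_16 [Fintype α] [Fintype β] (G : SimpleGraph α) (H : SimpleGraph β)
    (hG : G.Connected) (hn : 2 ≤ Fintype.card α)
    (htw : ∀ u v : α, TrueTwins G u v → u = v)
    (hn' : 2 ≤ Fintype.card β) (hdiam : 2 < H.ediam) :
    sdim (lexProd G H) =
      Fintype.card α * sdim (joinK1 H) + Fintype.card β * sdim G -
        sdim G * sdim (joinK1 H) :=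
  stmt_16_general G H hG hn htw hdiam

end Paper
end
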